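/- arXiv:1211.7158 — 2 statements merged into one kernel-verified Lean document; each statement's English description precedes it below -/
import Mathlib

section
/- Let η = (η₁, η₂, η₃) ∈ ℤ³ with η₁, η₂, η₃ > 0, ε > 0, and let B = (0, εη₁) × (0, εη₂) × (0, εη₃) be the bond volume with main diagonal from the origin to εη. Suppose v : closure(B) → ℝ is continuous and piecewise linear with respect to a type A decomposition of B into six tetrahedra (the decomposition of the box into six tetrahedra whose edges include the main diagonal (0, εη), the three face diagonals emanating from 0, the three face diagonals emanating from εη, and the edges of B). Then ∫_B ∇v(x)·η dx = ε² η₁η₂η₃ (v(εη) − v(0)). -/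
/-!
Every Kuhn tetrahedron contains both ends `0` and `b = εη` of the main diagonal, so the
affine piece `x ↦ ⟪a, x⟫ + c` of `v` on it satisfies `⟪a, b⟫ = v b - v 0`. Off the null
planes `x i / b i = x j / b j` each point of the box lies in the interior of one tetrahedron,
so `∇v · η = (v b - v 0) / ε` almost everywhere, and the box has volume `ε³ η₁ η₂ η₃`.
-/

open MeasureTheory
open scoped RealInnerProductSpace

noncomputable section

/-- ℝ³ as a Euclidean space. -/
abbrev E3 := EuclideanSpace ℝ (Fin 3)

/-- Build a point of `E3` from a plain function. -/
def ev (f : Fin 3 → ℝ) : E3 := WithLp.toLp 2 f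

/-- The open axis-aligned box `(0,b₁) × (0,b₂) × (0,b₃)`. -/
def openBox (b : Fin 3 → ℝ) : Set E3 := {x | ∀ i, x i ∈ Set.Ioo 0 (b i)}

/-- The (closed) tetrahedron of the type A (Kuhn) decomposition of the box with side
lengths `b` associated to the permutation `σ`:  the points whose scaled coordinates
`x i / b i` are ordered according to `σ`.  The six tetrahedra obtained in this way have
as edges exactly the main diagonal from `0` to `(b₁,b₂,b₃)`, the three face diagonals
emanating from `0`, the three face diagonals emanating from `(b₁,b₂,b₃)` and the edges
of the box. -/
def kuhnTet (b : Fin 3 → ℝ) (σ : Equiv.Perm (Fin 3)) : Set E3 :=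
  {x | 0 ≤ x (σ 0) / b (σ 0) ∧ x (σ 0) / b (σ 0) ≤ x (σ 1) / b (σ 1) ∧
       x (σ 1) / b (σ 1) ≤ x (σ 2) / b (σ 2) ∧ x (σ 2) / b (σ 2) ≤ 1}

open Filter Topology

def IsKuhnPiecewiseAffine (b : Fin 3 → ℝ) (v : E3 → ℝ) : Prop :=
  ∀ σ : Equiv.Perm (Fin 3), ∃ (a : E3) (c : ℝ),
    ∀ x ∈ kuhnTet b σ ∩ closure (openBox b), v x = ⟪a, x⟫ + c

section Box

variable {b : Fin 3 → ℝ}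

lemma openBox_eq_preimage (b : Fin 3 → ℝ) :
    openBox b =
      PiLp.homeomorph 2 (fun _ : Fin 3 => ℝ) ⁻¹' Set.univ.pi fun i => Set.Ioo 0 (b i) := by
  ext x; simp only [openBox, Set.mem_preimage, Set.mem_univ_pi]; rfl

lemma isOpen_openBox (b : Fin 3 → ℝ) : IsOpen (openBox b) := by
  rw [openBox_eq_preimage]
  exact (isOpen_set_pi Set.finite_univ fun i _ => isOpen_Ioo).preimage
    (PiLp.homeomorph 2 _).continuous

lemma closure_openBox (hb : ∀ i, 0 < b i) :
    closure (openBox b) = {x | ∀ i, x i ∈ Set.Icc 0 (b i)} := by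
  rw [openBox_eq_preimage, ← Homeomorph.preimage_closure, closure_pi_set]
  ext x
  simp only [Set.mem_preimage, Set.mem_univ_pi, closure_Ioo (hb _).ne]; rfl

lemma volume_real_openBox (hb : ∀ i, 0 ≤ b i) : volume.real (openBox b) = ∏ i, b i := by
  have hset : openBox b = (MeasurableEquiv.toLp 2 (Fin 3 → ℝ)).symm ⁻¹'
      Set.univ.pi fun i => Set.Ioo 0 (b i) := by
    ext x; simp [openBox]
  rw [measureReal_def, hset,
    (EuclideanSpace.volume_preserving_symm_measurableEquiv_toLp _).measure_preimage
      (MeasurableSet.univ_pi fun i => measurableSet_Ioo).nullMeasurableSet, volume_pi_pi]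
  simp [Real.volume_Ioo, ENNReal.toReal_prod, hb]

end Box

lemma zero_mem_kuhnTet (b : Fin 3 → ℝ) (σ : Equiv.Perm (Fin 3)) : (0 : E3) ∈ kuhnTet b σ := by
  simp [kuhnTet]

section Kuhn

variable {b : Fin 3 → ℝ}

lemma ev_mem_kuhnTet (hb : ∀ i, b i ≠ 0) (σ : Equiv.Perm (Fin 3)) : ev b ∈ kuhnTet b σ := by
  simp [kuhnTet, ev, hb]

lemma inner_ev_eq_sub_of_eqOn_kuhnTet (hb : ∀ i, 0 < b i) {v : E3 → ℝ} {σ : Equiv.Perm (Fin 3)}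
    {a : E3} {c : ℝ} (hv : ∀ x ∈ kuhnTet b σ ∩ closure (openBox b), v x = ⟪a, x⟫ + c) :
    ⟪a, ev b⟫ = v (ev b) - v 0 := by
  have hclosure := closure_openBox hb
  have h0 := hv 0 ⟨zero_mem_kuhnTet b σ, by simp [hclosure, (hb _).le]⟩
  have h1 := hv (ev b) ⟨ev_mem_kuhnTet (fun i => (hb i).ne') σ, by simp [hclosure, ev, (hb _).le]⟩
  rw [h0, h1, inner_zero_right]
  ring

lemma exists_kuhnTet_mem_nhds (hb : ∀ i, 0 < b i) {x : E3} (hx : x ∈ openBox b)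
    (hinj : Function.Injective fun i => x i / b i) :
    ∃ σ, kuhnTet b σ ∩ closure (openBox b) ∈ 𝓝 x := by
  set r : Fin 3 → ℝ := fun i => x i / b i
  let σ := Tuple.sort r
  have hmono : StrictMono (r ∘ σ) :=
    (Tuple.monotone_sort r).strictMono_of_injective (hinj.comp σ.injective)
  have hcont : ∀ k, Continuous fun y : E3 => y k / b k := fun k => by fun_prop
  have h01 := (hcont (σ 0)).continuousAt.eventually_lt (hcont (σ 1)).continuousAt
    (hmono (by decide : (0 : Fin 3) < 1))
  have h12 := (hcont (σ 1)).continuousAt.eventually_lt (hcont (σ 2)).continuousAt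
    (hmono (by decide : (1 : Fin 3) < 2))
  refine ⟨σ, ?_⟩
  filter_upwards [h01, h12, (isOpen_openBox b).mem_nhds hx] with y hy01 hy12 hy
  refine ⟨⟨(div_pos (hy _).1 (hb _)).le, hy01.le, hy12.le, ?_⟩, subset_closure hy⟩
  exact ((div_lt_one (hb _)).2 (hy _).2).le

end Kuhn

lemma volume_setOf_div_eq_div {ι : Type*} [Fintype ι] {b : ι → ℝ} {i j : ι} (hij : i ≠ j)
    (hbi : b i ≠ 0) : volume {x : EuclideanSpace ℝ ι | x i / b i = x j / b j} = 0 := by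
  let f : EuclideanSpace ℝ ι →ₗ[ℝ] ℝ :=
    (b i)⁻¹ • (EuclideanSpace.proj i : EuclideanSpace ℝ ι →L[ℝ] ℝ).toLinearMap -
      (b j)⁻¹ • (EuclideanSpace.proj j : EuclideanSpace ℝ ι →L[ℝ] ℝ).toLinearMap
  have hker : {x : EuclideanSpace ℝ ι | x i / b i = x j / b j} = LinearMap.ker f := by
    ext x; simp [f, sub_eq_zero, div_eq_inv_mul]
  have hf : f ≠ 0 := fun h => by
    classical
    simpa [f, hij, hbi] using LinearMap.congr_fun h (EuclideanSpace.single i 1)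
  rw [hker]
  exact Measure.addHaar_submodule _ _ (by rwa [ne_eq, LinearMap.ker_eq_top])

lemma ae_injective_div {ι : Type*} [Fintype ι] {b : ι → ℝ} (hb : ∀ i, b i ≠ 0) :
    ∀ᵐ x : EuclideanSpace ℝ ι, Function.Injective fun i => x i / b i := by
  simp only [Function.Injective, ae_all_iff]
  intro i j
  by_cases hij : i = j
  · exact Eventually.of_forall fun _ _ => hij
  · filter_upwards [(measure_eq_zero_iff_ae_notMem).1 (volume_setOf_div_eq_div hij (hb i))]
      with x hx hxij
    exact absurd hxij hx

theorem ae_fderiv_apply_ev_eq {b : Fin 3 → ℝ} (hb : ∀ i, 0 < b i) {v : E3 → ℝ}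
    (hv : IsKuhnPiecewiseAffine b v) :
    ∀ᵐ x ∂volume.restrict (openBox b), fderiv ℝ v x (ev b) = v (ev b) - v 0 := by
  choose a c hac using hv
  rw [ae_restrict_iff' (isOpen_openBox b).measurableSet]
  filter_upwards [ae_injective_div fun i => (hb i).ne'] with x hinj hx
  obtain ⟨σ, hσ⟩ := exists_kuhnTet_mem_nhds hb hx hinj
  have hloc : v =ᶠ[𝓝 x] fun y => ⟪a σ, y⟫ + c σ := mem_of_superset hσ (hac σ)
  have hderiv : HasFDerivAt (fun y => ⟪a σ, y⟫ + c σ) (innerSL ℝ (a σ)) x :=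
    (innerSL ℝ (a σ)).hasFDerivAt.add_const (c σ)
  rw [hloc.fderiv_eq, hderiv.fderiv, innerSL_apply_apply]
  exact inner_ev_eq_sub_of_eqOn_kuhnTet hb (hac σ)

theorem stmt2_general (η : Fin 3 → ℤ) (hη : ∀ i, 0 < η i) (ε : ℝ) (hε : 0 < ε)
    (v : E3 → ℝ)
    (hpl : ∀ σ : Equiv.Perm (Fin 3), ∃ (a : E3) (c : ℝ),
      ∀ x ∈ kuhnTet (fun i => ε * (η i : ℝ)) σ ∩ closure (openBox (fun i => ε * (η i : ℝ))),
        v x = ⟪a, x⟫ + c) :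
    ∫ x in openBox (fun i => ε * (η i : ℝ)), fderiv ℝ v x (ev fun i => (η i : ℝ)) ∂volume =
      ε ^ 2 * ((η 0 : ℝ) * (η 1 : ℝ) * (η 2 : ℝ)) *
        (v (ev fun i => ε * (η i : ℝ)) - v 0) := by
  set b : Fin 3 → ℝ := fun i => ε * (η i : ℝ)
  have hb : ∀ i, 0 < b i := fun i => mul_pos hε (Int.cast_pos.2 (hη i))
  have hdiag : ev b = ε • ev fun i => (η i : ℝ) := rfl
  have hae : ∀ᵐ x ∂volume.restrict (openBox b),
      fderiv ℝ v x (ev fun i => (η i : ℝ)) = ε⁻¹ * (v (ev b) - v 0) := by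
    filter_upwards [ae_fderiv_apply_ev_eq hb hpl] with x hx
    rw [← hx, hdiag, map_smul, smul_eq_mul, inv_mul_cancel_left₀ hε.ne']
  rw [integral_congr_ae hae, setIntegral_const, volume_real_openBox fun i => (hb i).le,
    Fin.prod_univ_three, smul_eq_mul]
  field_simp
  ring

/-- bond volume lemma for one bond volume.  Let `η ∈ ℤ³` with positive
entries, `ε > 0` and let `B = (0,εη₁) × (0,εη₂) × (0,εη₃)` be the bond volume with main
diagonal from `0` to `εη`.  If `v` is continuous on `closure B` and piecewise linear with
respect to the type A decomposition of `B` into six tetrahedra (i.e. affine on each Kuhn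
tetrahedron), then `∫_B ∇v·η dx = ε² η₁η₂η₃ (v(εη) − v(0))`. -/
theorem stmt2 (η : Fin 3 → ℤ) (hη : ∀ i, 0 < η i) (ε : ℝ) (hε : 0 < ε)
    (v : E3 → ℝ)
    (hcont : ContinuousOn v (closure (openBox (fun i => ε * (η i : ℝ)))))
    (hpl : ∀ σ : Equiv.Perm (Fin 3), ∃ (a : E3) (c : ℝ),
      ∀ x ∈ kuhnTet (fun i => ε * (η i : ℝ)) σ ∩ closure (openBox (fun i => ε * (η i : ℝ))),
        v x = ⟪a, x⟫ + c) :
    ∫ x in openBox (fun i => ε * (η i : ℝ)), fderiv ℝ v x (ev fun i => (η i : ℝ)) ∂volume =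
      ε ^ 2 * ((η 0 : ℝ) * (η 1 : ℝ) * (η 2 : ℝ)) *
        (v (ev fun i => ε * (η i : ℝ)) - v 0) :=
  stmt2_general η hη ε hε v hpl
end
end

section
/- With the cell atomistic Cauchy–Born energy Φ^{a,CB}(y) = ε³ Σ_{ℓ∈𝔏} Σ_{η∈R} φ_η(∇̄y|_{K_ℓ} η), where ∇̄y|_{K_ℓ} is the matrix of averaged discrete derivatives on the cell K_ℓ, the energy is free of ghost forces: for the homogeneous deformation y_F(x) = Fx and every periodic continuous piecewise-trilinear test function v (equivalently every periodic lattice function), ⟨DΦ^{a,CB}(y_F), v⟩ = 0. -/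
/-! The averaged discrete gradient of the homogeneous deformation `y_F` is `F` on every cell, so
the first variation collapses to `ε³ Σ_η φ_η′(F η) (Σ_ℓ ∇̄v|_{K_ℓ} η)`. Each averaged derivative
is an average of differences `v(x + ε e_α) − v(x)` over vertices `x` of `K_ℓ`; summed over all
cells of the periodic domain these telescope to zero, because shifting the cell index by `e_α`
permutes the cells of the torus. -/

open MeasureTheory

noncomputable section

/-- The `α`-th standard basis vector of ℝ³. -/
def e3 (α : Fin 3) : E3 := EuclideanSpace.single α 1

/-- The open lattice cell `K_ℓ`. -/
def cellOf (ε : ℝ) (ℓ : Fin 3 → ℤ) : Set E3 :=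
  {x | ∀ i, x i ∈ Set.Ioo (ε * (ℓ i : ℝ)) (ε * ((ℓ i : ℝ) + 1))}

/-- The vertex of the cell `K_ℓ` selected by `s : Fin 3 → Bool`. -/
def cellVert (ε : ℝ) (ℓ : Fin 3 → ℤ) (s : Fin 3 → Bool) : E3 :=
  ev fun i => ε * ((ℓ i : ℝ) + if s i then 1 else 0)

/-- The (vector-valued) averaged discrete derivative `D̄̄_{e_α} w_ℓ` on the cell `K_ℓ`:
the average over the four edges of `K_ℓ` parallel to `e_α` of the difference quotients. -/
def avgDiscrDerivV (ε : ℝ) (w : E3 → E3) (ℓ : Fin 3 → ℤ) (α : Fin 3) : E3 :=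
  (1 / 4 : ℝ) • ∑ s ∈ Finset.univ.filter (fun s : Fin 3 → Bool => s α = false),
    (ε⁻¹) • (w (cellVert ε ℓ (Function.update s α true)) - w (cellVert ε ℓ s))

/-- The averaged discrete gradient `∇̄w|_{K_ℓ}` applied to the interaction vector
`η ∈ ℤ³`:  `∇̄w|_{K_ℓ} η = Σ_α η_α D̄̄_{e_α} w_ℓ`. -/
def avgGradApply (ε : ℝ) (w : E3 → E3) (ℓ : Fin 3 → ℤ) (η : Fin 3 → ℤ) : E3 :=
  ∑ α : Fin 3, ((η α : ℝ)) • avgDiscrDerivV ε w ℓ α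

theorem Fin.val_add_one_add_div_mul {N : ℕ} [NeZero N] (a : Fin N) :
    (a : ℕ) + 1 = ((a + 1 : Fin N) : ℕ) + ((a : ℕ) + 1) / N * N := by
  rw [Fin.val_add, Fin.val_one', Nat.add_mod_mod, mul_comm]
  exact (Nat.mod_add_div _ _).symm

section Periodic

variable {ι M : Type*} [DecidableEq ι] {N : ℕ} {g : (ι → ℤ) → M}

theorem periodic_add_single_mul (hg : ∀ m β, g (m + Pi.single β (N : ℤ)) = g m)
    (m : ι → ℤ) (β : ι) (q : ℕ) : g (m + Pi.single β ((q : ℤ) * N)) = g m := by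
  induction q with
  | zero => simp
  | succ q ih =>
    calc g (m + Pi.single β (((q + 1 : ℕ) : ℤ) * N))
        = g (m + Pi.single β ((q : ℤ) * N) + Pi.single β (N : ℤ)) := by
          rw [add_assoc, ← Pi.single_add]
          push_cast
          ring_nf
      _ = g m := by rw [hg, ih]

theorem sum_add_single_one_of_periodic [Fintype ι] [AddCommMonoid M] [NeZero N]
    (hg : ∀ m β, g (m + Pi.single β (N : ℤ)) = g m) (α : ι) :
    ∑ ℓ : ι → Fin N, g ((fun i => ((ℓ i : ℕ) : ℤ)) + Pi.single α 1) =
      ∑ ℓ : ι → Fin N, g (fun i => ((ℓ i : ℕ) : ℤ)) := by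
  -- `ℓ + e_α` computed in `Fin N` differs from the integer shift by a multiple of `N e_α`.
  have hshift (ℓ : ι → Fin N) : g ((fun i => ((ℓ i : ℕ) : ℤ)) + Pi.single α 1) =
      g (fun i => (((ℓ + Pi.single α 1 : ι → Fin N) i : ℕ) : ℤ)) := by
    refine Eq.trans ?_ (periodic_add_single_mul hg _ α (((ℓ α : ℕ) + 1) / N))
    congr 1
    ext i
    rcases eq_or_ne i α with rfl | hi
    · simp only [Pi.add_apply, Pi.single_eq_same]
      exact_mod_cast Fin.val_add_one_add_div_mul (ℓ i)
    · simp [hi]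
  simp_rw [hshift]
  exact Equiv.sum_comp (Equiv.addRight (Pi.single α 1))
    (fun ℓ : ι → Fin N => g (fun i => ((ℓ i : ℕ) : ℤ)))

end Periodic

theorem cellVert_update_true {ε : ℝ} {ℓ : Fin 3 → ℤ} {s : Fin 3 → Bool} {α : Fin 3}
    (hs : s α = false) :
    cellVert ε ℓ (Function.update s α true) = cellVert ε (ℓ + Pi.single α 1) s := by
  ext i
  rcases eq_or_ne i α with rfl | hi
  · simp [cellVert, ev, hs]
  · simp [cellVert, ev, hi]

theorem cellVert_add_single {ε : ℝ} {N : ℕ} (hεN : ε * N = 1) (ℓ : Fin 3 → ℤ)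
    (s : Fin 3 → Bool) (β : Fin 3) :
    cellVert ε (ℓ + Pi.single β (N : ℤ)) s = cellVert ε ℓ s + e3 β := by
  ext i
  rcases eq_or_ne i β with rfl | hi
  · simp only [cellVert, ev, e3, Pi.add_apply, Pi.single_eq_same, Int.cast_add, Int.cast_natCast,
      PiLp.add_apply, PiLp.single_eq_same]
    linear_combination hεN
  · simp [cellVert, ev, e3, hi]

theorem sum_avgDiscrDerivV_eq_zero {ε : ℝ} {N : ℕ} [NeZero N] (hεN : ε * N = 1) {v : E3 → E3}
    (hper : ∀ x i, v (x + e3 i) = v x) (α : Fin 3) :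
    ∑ ℓ : Fin 3 → Fin N, avgDiscrDerivV ε v (fun i => ((ℓ i : ℕ) : ℤ)) α = 0 := by
  have hvert (s : Fin 3 → Bool) : ∑ ℓ : Fin 3 → Fin N,
      v (cellVert ε ((fun i => ((ℓ i : ℕ) : ℤ)) + Pi.single α 1) s) =
        ∑ ℓ : Fin 3 → Fin N, v (cellVert ε (fun i => ((ℓ i : ℕ) : ℤ)) s) :=
    sum_add_single_one_of_periodic (g := fun m => v (cellVert ε m s))
      (fun m β => by simp only [cellVert_add_single hεN, hper]) α
  simp only [avgDiscrDerivV, ← Finset.smul_sum]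
  rw [Finset.sum_comm]
  refine smul_eq_zero_of_right _ (smul_eq_zero_of_right _ (Finset.sum_eq_zero fun s hs => ?_))
  rw [Finset.sum_sub_distrib]
  simp only [cellVert_update_true (Finset.mem_filter.mp hs).2, hvert, sub_self]

theorem sum_avgGradApply_eq_zero {ε : ℝ} {N : ℕ} [NeZero N] (hεN : ε * N = 1) {v : E3 → E3}
    (hper : ∀ x i, v (x + e3 i) = v x) (η : Fin 3 → ℤ) :
    ∑ ℓ : Fin 3 → Fin N, avgGradApply ε v (fun i => ((ℓ i : ℕ) : ℤ)) η = 0 := by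
  simp only [avgGradApply]
  rw [Finset.sum_comm]
  simp only [← Finset.smul_sum, sum_avgDiscrDerivV_eq_zero hεN hper, smul_zero,
    Finset.sum_const_zero]

section Linear

variable {ε : ℝ} {F : Fin 3 → Fin 3 → ℝ} {w : E3 → E3}

theorem smul_inv_sub_cellVert_of_linear (hε : ε ≠ 0)
    (hw : ∀ x, w x = ev fun i => ∑ j, F i j * x j)
    (ℓ : Fin 3 → ℤ) {s : Fin 3 → Bool} {α : Fin 3} (hs : s α = false) :
    ε⁻¹ • (w (cellVert ε ℓ (Function.update s α true)) - w (cellVert ε ℓ s)) =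
      ev fun i => F i α := by
  ext i
  simp only [hw, ev, cellVert, PiLp.toLp_apply, PiLp.smul_apply, PiLp.sub_apply, smul_eq_mul,
    ← Finset.sum_sub_distrib]
  rw [Finset.sum_eq_single α]
  · rw [Function.update_self, hs]
    field_simp
    simp
  · intro j _ hj
    rw [Function.update_of_ne hj]
    ring
  · simp

theorem avgDiscrDerivV_of_linear (hε : ε ≠ 0) (hw : ∀ x, w x = ev fun i => ∑ j, F i j * x j)
    (ℓ : Fin 3 → ℤ) (α : Fin 3) : avgDiscrDerivV ε w ℓ α = ev fun i => F i α := by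
  have hcard : (Finset.univ.filter fun s : Fin 3 → Bool => s α = false).card = 4 := by
    fin_cases α <;> rfl
  rw [avgDiscrDerivV, Finset.sum_congr rfl fun s hs =>
    smul_inv_sub_cellVert_of_linear hε hw ℓ (Finset.mem_filter.mp hs).2,
    Finset.sum_const, hcard, ← Nat.cast_smul_eq_nsmul ℝ, smul_smul]
  norm_num

theorem avgGradApply_of_linear (hε : ε ≠ 0) (hw : ∀ x, w x = ev fun i => ∑ j, F i j * x j)
    (ℓ η : Fin 3 → ℤ) : avgGradApply ε w ℓ η = ∑ α, (η α : ℝ) • ev fun i => F i α := by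
  simp only [avgGradApply, avgDiscrDerivV_of_linear hε hw]

end Linear

theorem stmt9_general (k : ℕ) (hk : 0 < k) (ε : ℝ) (hε : ε = 1 / (k : ℝ))
    (R : Finset (Fin 3 → ℤ)) (φ : (Fin 3 → ℤ) → E3 → ℝ)
    (F : Fin 3 → Fin 3 → ℝ)
    (yF : E3 → E3) (hyF : ∀ x, yF x = ev fun i => ∑ j, F i j * x j)
    (v : E3 → E3)
    (hper : ∀ (x : E3) (i : Fin 3), v (x + e3 i) = v x) :
    ε ^ 3 * ∑ ℓ : Fin 3 → Fin k, ∑ η ∈ R,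
        fderiv ℝ (φ η) (avgGradApply ε yF (fun i => (ℓ i : ℤ)) η)
          (avgGradApply ε v (fun i => (ℓ i : ℤ)) η) = 0 := by
  have : NeZero k := ⟨hk.ne'⟩
  have hεk : ε * k = 1 := by rw [hε]; field_simp
  have hε0 : ε ≠ 0 := left_ne_zero_of_mul_eq_one hεk
  simp only [avgGradApply_of_linear hε0 hyF]
  rw [Finset.sum_comm]
  simp only [← map_sum, sum_avgGradApply_eq_zero hεk hper, map_zero, Finset.sum_const_zero,
    mul_zero]

/-- the cell atomistic Cauchy–Born energy is free of ghost forces.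
For the homogeneous deformation `y_F(x) = Fx` and every periodic continuous piecewise
trilinear test function `v` on the scaled lattice `εℤ³` (`ε = 1/k`) over the periodic
domain, the first variation of `Φ^{a,CB}(y) = ε³ Σ_ℓ Σ_{η∈R} φ_η(∇̄y|_{K_ℓ} η)`
vanishes:  `ε³ Σ_ℓ Σ_{η∈R} φ_η′(∇̄y_F η)·(∇̄v η) = 0`. -/
theorem stmt9 (k : ℕ) (hk : 0 < k) (ε : ℝ) (hε : ε = 1 / (k : ℝ))
    (R : Finset (Fin 3 → ℤ)) (φ : (Fin 3 → ℤ) → E3 → ℝ)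
    (hφ : ∀ η ∈ R, ContDiff ℝ 1 (φ η))
    (F : Fin 3 → Fin 3 → ℝ)
    (yF : E3 → E3) (hyF : ∀ x, yF x = ev fun i => ∑ j, F i j * x j)
    (v : E3 → E3) (hcont : Continuous v)
    (hper : ∀ (x : E3) (i : Fin 3), v (x + e3 i) = v x)
    (c : (Fin 3 → ℤ) → (Fin 3 → Bool) → E3)
    (hQ1 : ∀ (ℓ : Fin 3 → ℤ), ∀ x ∈ closure (cellOf ε ℓ),
      v x = ∑ s : Fin 3 → Bool, (∏ i, (if s i then x i else 1)) • c ℓ s) :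
    ε ^ 3 * ∑ ℓ : Fin 3 → Fin k, ∑ η ∈ R,
        fderiv ℝ (φ η) (avgGradApply ε yF (fun i => (ℓ i : ℤ)) η)
          (avgGradApply ε v (fun i => (ℓ i : ℤ)) η) = 0 :=
  stmt9_general k hk ε hε R φ F yF hyF v hper
end
end
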